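/- arXiv:1611.09631 — 4 statements merged into one kernel-verified Lean document; each statement's English description precedes it below -/
import Mathlib

section
/- (Cover's theorem) Let ν be a Borel probability measure with full support on the closed d-simplex, and let prices satisfy c ≤ s^j_{t+1}/s^j_t ≤ C for all j, t. Define V_T(ν) = ∫_{Δ̄^d} V_T(b) dν(b) and V*_T = max_{b ∈ Δ̄^d} V_T(b). Then lim_{T→∞} (1/T) log(V_T(ν)/V*_T) = 0. -/
/-!
The wealth `V_T(b)` of a constant rebalanced portfolio is a product of `T` factors, each at
least `c`, and moving `b` by `δ` changes every factor by at most `d C δ`. Hence on the `δ`-ball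
around any `b'` in the simplex, `V_T ≥ q^T V_T(b')` with `q = 1 - d C δ / c → 1` as `δ → 0`.
By compactness and full support, the `δ`-balls centred in the simplex have `ν`-measure at least
some `m > 0` independent of the centre, so `m q^T V*_T ≤ V_T(ν) ≤ V*_T`, and
`(1/T) log (V_T(ν)/V*_T)` lies in `[(log m)/T + log q, 0]` for every `q < 1`.
-/

open Finset MeasureTheory Real Filter Topology Metric

lemma tendsto_one_div_mul_log_of_forall_pow_le {r : ℕ → ℝ} (hr : ∀ T, r T ≤ 1)
    (hpow : ∀ q < 1, 0 < q → ∃ m > 0, ∀ T, m * q ^ T ≤ r T) :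
    Tendsto (fun T : ℕ => (1 / T : ℝ) * log (r T)) atTop (𝓝 0) := by
  refine tendsto_order.2 ⟨fun a ha => ?_, fun a ha => Eventually.of_forall fun T => ?_⟩
  · obtain ⟨m, hm, hmr⟩ := hpow (exp (a / 2)) (exp_lt_one_iff.2 (by linarith)) (exp_pos _)
    have hlim : Tendsto (fun T : ℕ => log m / T) atTop (𝓝 0) :=
      tendsto_const_div_atTop_nhds_zero_nat _
    filter_upwards [hlim.eventually (lt_mem_nhds (by linarith : a / 2 < 0)),
      eventually_gt_atTop 0] with T hT hT0
    have hlog : log m + T * (a / 2) ≤ log (r T) := by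
      calc log m + T * (a / 2) = log (m * exp (a / 2) ^ T) := by
            rw [log_mul hm.ne' (by positivity), log_pow, log_exp]
        _ ≤ log (r T) := log_le_log (by positivity) (hmr T)
    have hT0' : (0 : ℝ) < T := by exact_mod_cast hT0
    calc a < log m / T + a / 2 := by linarith
      _ = 1 / T * (log m + T * (a / 2)) := by field_simp
      _ ≤ 1 / T * log (r T) := by gcongr
  · obtain ⟨m, hm, hmr⟩ := hpow (1 / 2) (by norm_num) (by norm_num)
    have hr0 : 0 ≤ r T := le_trans (by positivity) (hmr T)
    exact (mul_nonpos_of_nonneg_of_nonpos (by positivity) (log_nonpos hr0 (hr T))).trans_lt ha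

lemma exists_pos_forall_le_measure_ball {α : Type*} [PseudoMetricSpace α] [MeasurableSpace α]
    (μ : Measure α) {K : Set α} (hK : IsCompact K) (hμ : ∀ x ∈ K, ∀ ε > 0, 0 < μ (ball x ε))
    {r : ℝ} (hr : 0 < r) : ∃ m > 0, ∀ x ∈ K, m ≤ μ (ball x r) := by
  obtain ⟨t, htK, hKt⟩ := hK.elim_nhds_subcover (fun x => ball x (r / 2))
    fun x _ => ball_mem_nhds x (half_pos hr)
  refine ⟨t.inf fun y => μ (ball y (r / 2)), ?_, fun x hx => ?_⟩
  · exact Finset.lt_inf_iff ENNReal.zero_lt_top |>.2 fun y hy => hμ y (htK y hy) _ (half_pos hr)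
  · obtain ⟨y, hy, hxy⟩ := Set.mem_iUnion₂.1 (hKt hx)
    refine (Finset.inf_le hy).trans (measure_mono (ball_subset_ball' ?_))
    rw [dist_comm]
    linarith [mem_ball.1 hxy]

section Simplex

variable {ι : Type*} [Fintype ι] {b b' x : ι → ℝ} {c C : ℝ}

lemma le_sum_mul_of_mem_stdSimplex (hb : b ∈ stdSimplex ℝ ι) (hx : ∀ j, c ≤ x j) :
    c ≤ ∑ j, b j * x j :=
  calc c = ∑ j, b j * c := by rw [← sum_mul, hb.2, one_mul]
    _ ≤ ∑ j, b j * x j := sum_le_sum fun j _ => mul_le_mul_of_nonneg_left (hx j) (hb.1 j)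

lemma sum_mul_le_of_mem_stdSimplex (hb : b ∈ stdSimplex ℝ ι) (hx : ∀ j, x j ≤ C) :
    ∑ j, b j * x j ≤ C :=
  calc ∑ j, b j * x j ≤ ∑ j, b j * C :=
        sum_le_sum fun j _ => mul_le_mul_of_nonneg_left (hx j) (hb.1 j)
    _ = C := by rw [← sum_mul, hb.2, one_mul]

lemma mul_sum_mul_le_of_dist_le (hb' : b' ∈ stdSimplex ℝ ι)
    (hc : 0 ≤ c) (hx : ∀ j, c ≤ x j ∧ x j ≤ C) {q : ℝ} (hq : q ≤ 1)
    (hdist : Fintype.card ι * C * dist b b' ≤ (1 - q) * c) :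
    q * ∑ j, b' j * x j ≤ ∑ j, b j * x j := by
  have hdiff : ∑ j, b' j * x j - ∑ j, b j * x j ≤ Fintype.card ι * C * dist b b' :=
    calc ∑ j, b' j * x j - ∑ j, b j * x j = ∑ j, (b' j - b j) * x j := by
          simp only [sub_mul, sum_sub_distrib]
      _ ≤ ∑ _j : ι, dist b b' * C := sum_le_sum fun j _ => by
          have hxj : 0 ≤ x j := hc.trans (hx j).1
          calc (b' j - b j) * x j ≤ |b' j - b j| * x j :=
                mul_le_mul_of_nonneg_right (le_abs_self _) hxj
            _ ≤ dist b b' * C := by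
                refine mul_le_mul ?_ (hx j).2 hxj dist_nonneg
                rw [← Real.dist_eq, dist_comm b]
                exact dist_le_pi_dist b' b j
      _ = Fintype.card ι * C * dist b b' := by simp only [sum_const, card_univ, nsmul_eq_mul]; ring
  have hc' : (1 - q) * c ≤ (1 - q) * ∑ j, b' j * x j :=
    mul_le_mul_of_nonneg_left (le_sum_mul_of_mem_stdSimplex hb' fun j => (hx j).1) (by linarith)
  linarith

end Simplex

/-- `crpWealth X T b` is `V_T(b)` for the price relatives `X j t = s^j_{t+1} / s^j_t`. -/
noncomputable def crpWealth {ι : Type*} [Fintype ι] (X : ι → ℕ → ℝ) (T : ℕ) (b : ι → ℝ) : ℝ :=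
  ∏ t ∈ range T, ∑ j, b j * X j t

section Wealth

variable {ι : Type*} [Fintype ι] {X : ι → ℕ → ℝ} {b b' : ι → ℝ} {c C : ℝ}

lemma continuous_crpWealth (X : ι → ℕ → ℝ) (T : ℕ) : Continuous (crpWealth X T) := by
  unfold crpWealth
  fun_prop

lemma crpWealth_pos (hc : 0 < c) (hX : ∀ j t, c ≤ X j t) (hb : b ∈ stdSimplex ℝ ι) (T : ℕ) :
    0 < crpWealth X T b :=
  prod_pos fun t _ => hc.trans_le (le_sum_mul_of_mem_stdSimplex hb fun j => hX j t)

lemma crpWealth_le_pow (hc : 0 ≤ c) (hX : ∀ j t, c ≤ X j t ∧ X j t ≤ C)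
    (hb : b ∈ stdSimplex ℝ ι) (T : ℕ) : crpWealth X T b ≤ C ^ T := by
  calc crpWealth X T b ≤ ∏ _t ∈ range T, C :=
        prod_le_prod (fun t _ => hc.trans (le_sum_mul_of_mem_stdSimplex hb fun j => (hX j t).1))
          fun t _ => sum_mul_le_of_mem_stdSimplex hb fun j => (hX j t).2
    _ = C ^ T := by rw [prod_const, card_range]

lemma pow_mul_crpWealth_le_of_dist_le (hb' : b' ∈ stdSimplex ℝ ι)
    (hc : 0 ≤ c) (hX : ∀ j t, c ≤ X j t ∧ X j t ≤ C) {q : ℝ} (hq0 : 0 ≤ q) (hq1 : q ≤ 1)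
    (hdist : Fintype.card ι * C * dist b b' ≤ (1 - q) * c) (T : ℕ) :
    q ^ T * crpWealth X T b' ≤ crpWealth X T b := by
  calc q ^ T * crpWealth X T b' = ∏ t ∈ range T, q * ∑ j, b' j * X j t := by
        rw [crpWealth, prod_mul_distrib, prod_const, card_range]
    _ ≤ crpWealth X T b :=
        prod_le_prod (fun t _ => mul_nonneg hq0
          (hc.trans (le_sum_mul_of_mem_stdSimplex hb' fun j => (hX j t).1)))
        fun t _ => mul_sum_mul_le_of_dist_le hb' hc (hX · t) hq1 hdist

lemma integrableOn_crpWealth (ν : Measure (ι → ℝ)) [IsFiniteMeasure ν] (X : ι → ℕ → ℝ) (T : ℕ) :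
    IntegrableOn (crpWealth X T) (stdSimplex ℝ ι) ν :=
  (continuous_crpWealth X T).continuousOn.integrableOn_compact (isCompact_stdSimplex ℝ ι)

lemma bddAbove_range_crpWealth (hc : 0 ≤ c) (hX : ∀ j t, c ≤ X j t ∧ X j t ≤ C) (T : ℕ) :
    BddAbove (Set.range fun b : stdSimplex ℝ ι => crpWealth X T b) :=
  ⟨C ^ T, by rintro _ ⟨b, rfl⟩; exact crpWealth_le_pow hc hX b.2 T⟩

lemma iSup_crpWealth_pos [Nonempty ι] (hc : 0 < c) (hX : ∀ j t, c ≤ X j t ∧ X j t ≤ C) (T : ℕ) :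
    0 < ⨆ b : stdSimplex ℝ ι, crpWealth X T b := by
  let b₀ : stdSimplex ℝ ι := Classical.arbitrary _
  exact (crpWealth_pos hc (fun j t => (hX j t).1) b₀.2 T).trans_le
    (le_ciSup (bddAbove_range_crpWealth hc.le hX T) b₀)

variable (ν : Measure (ι → ℝ))

lemma setIntegral_crpWealth_le_iSup [IsProbabilityMeasure ν] (hc : 0 ≤ c)
    (hX : ∀ j t, c ≤ X j t ∧ X j t ≤ C) (T : ℕ) :
    ∫ b in stdSimplex ℝ ι, crpWealth X T b ∂ν ≤ ⨆ b : stdSimplex ℝ ι, crpWealth X T b := by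
  set M := ⨆ b : stdSimplex ℝ ι, crpWealth X T b
  have hM : 0 ≤ M := Real.iSup_nonneg fun b =>
    prod_nonneg fun t _ => hc.trans (le_sum_mul_of_mem_stdSimplex b.2 fun j => (hX j t).1)
  calc ∫ b in stdSimplex ℝ ι, crpWealth X T b ∂ν ≤ ∫ _b in stdSimplex ℝ ι, M ∂ν :=
        setIntegral_mono_on (integrableOn_crpWealth ν X T) (integrableOn_const (measure_ne_top ν _))
          (isClosed_stdSimplex ℝ ι).measurableSet
          fun b hb => le_ciSup (bddAbove_range_crpWealth hc hX T) ⟨b, hb⟩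
    _ = ν.real (stdSimplex ℝ ι) * M := by rw [setIntegral_const, smul_eq_mul]
    _ ≤ M := mul_le_of_le_one_left hM measureReal_le_one

lemma exists_pos_forall_mul_pow_mul_crpWealth_le_setIntegral [Nonempty ι] [IsFiniteMeasure ν]
    (hc : 0 < c) (hcC : c ≤ C) (hX : ∀ j t, c ≤ X j t ∧ X j t ≤ C)
    (hsupp : ν (stdSimplex ℝ ι)ᶜ = 0) (hfull : ∀ b ∈ stdSimplex ℝ ι, ∀ ε > 0, 0 < ν (ball b ε))
    {q : ℝ} (hq0 : 0 ≤ q) (hq1 : q < 1) :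
    ∃ m > 0, ∀ T, ∀ b' ∈ stdSimplex ℝ ι,
      m * q ^ T * crpWealth X T b' ≤ ∫ b in stdSimplex ℝ ι, crpWealth X T b ∂ν := by
  set S := stdSimplex ℝ ι
  have hS : MeasurableSet S := (isClosed_stdSimplex ℝ ι).measurableSet
  have hCd : 0 < Fintype.card ι * C := mul_pos (Nat.cast_pos.2 Fintype.card_pos) (hc.trans_le hcC)
  set δ := (1 - q) * c / (Fintype.card ι * C)
  obtain ⟨m, hm0, hm⟩ := exists_pos_forall_le_measure_ball ν (isCompact_stdSimplex ℝ ι) hfull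
    (div_pos (mul_pos (sub_pos.2 hq1) hc) hCd)
  have hm_top : m ≠ ⊤ :=
    ((hm _ (Classical.arbitrary (stdSimplex ℝ ι)).2).trans_lt (measure_lt_top ν _)).ne
  refine ⟨m.toReal, ENNReal.toReal_pos hm0.ne' hm_top, fun T b' hb' => ?_⟩
  set B := ball b' δ ∩ S
  have hB : ∀ b ∈ B, q ^ T * crpWealth X T b' ≤ crpWealth X T b := fun b hb =>
    pow_mul_crpWealth_le_of_dist_le hb' hc.le hX hq0 hq1.le
      ((le_div_iff₀' hCd).1 (mem_ball.1 hb.1).le) T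
  have hmB : m.toReal ≤ ν.real B := by
    rw [measureReal_def, measure_inter_conull hsupp]
    exact ENNReal.toReal_mono (measure_ne_top ν _) (hm b' hb')
  calc m.toReal * q ^ T * crpWealth X T b' = q ^ T * crpWealth X T b' * m.toReal := by ring
    _ ≤ q ^ T * crpWealth X T b' * ν.real B := mul_le_mul_of_nonneg_left hmB
        (mul_nonneg (pow_nonneg hq0 T) (crpWealth_pos hc (fun j t => (hX j t).1) hb' T).le)
    _ ≤ ∫ b in B, crpWealth X T b ∂ν := setIntegral_ge_of_const_le_real
        (isOpen_ball.measurableSet.inter hS) (measure_ne_top ν _) hB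
        ((integrableOn_crpWealth ν X T).mono_set Set.inter_subset_right)
    _ ≤ ∫ b in S, crpWealth X T b ∂ν := by
        refine setIntegral_mono_set (integrableOn_crpWealth ν X T) ?_
          Set.inter_subset_right.eventuallyLE
        filter_upwards [ae_restrict_mem hS] with b hb
        exact (crpWealth_pos hc (fun j t => (hX j t).1) hb T).le

end Wealth

theorem stmt_5_general (d : ℕ) (hd : 0 < d) (c C : ℝ) (hc : 0 < c) (hcC : c ≤ C)
    (s : Fin d → ℕ → ℝ)
    (hratio : ∀ j t, c ≤ s j (t + 1) / s j t ∧ s j (t + 1) / s j t ≤ C)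
    (ν : Measure (Fin d → ℝ)) [IsProbabilityMeasure ν]
    (hsupp : ν {b : Fin d → ℝ | ¬ ((∀ j, 0 ≤ b j) ∧ ∑ j, b j = 1)} = 0)
    (hfull : ∀ U : Set (Fin d → ℝ), IsOpen U →
      (U ∩ {b : Fin d → ℝ | (∀ j, 0 ≤ b j) ∧ ∑ j, b j = 1}).Nonempty → 0 < ν U) :
    Filter.Tendsto (fun T : ℕ =>
      (1 / T : ℝ) * Real.log
        ((∫ b in {b : Fin d → ℝ | (∀ j, 0 ≤ b j) ∧ ∑ j, b j = 1},
            (∏ t ∈ Finset.range T, ∑ j, b j * (s j (t + 1) / s j t)) ∂ν) /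
         (⨆ b : {b : Fin d → ℝ // (∀ j, 0 ≤ b j) ∧ ∑ j, b j = 1},
            ∏ t ∈ Finset.range T, ∑ j, (b : Fin d → ℝ) j * (s j (t + 1) / s j t))))
      Filter.atTop (nhds 0) := by
  set X : Fin d → ℕ → ℝ := fun j t => s j (t + 1) / s j t
  change Tendsto (fun T : ℕ => (1 / T : ℝ) *
    log ((∫ b in stdSimplex ℝ (Fin d), crpWealth X T b ∂ν) /
      ⨆ b : stdSimplex ℝ (Fin d), crpWealth X T b)) atTop (𝓝 0)
  have : Nonempty (Fin d) := ⟨⟨0, hd⟩⟩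
  have hball : ∀ b ∈ stdSimplex ℝ (Fin d), ∀ ε > 0, 0 < ν (ball b ε) :=
    fun b hb ε hε => hfull _ isOpen_ball ⟨b, mem_ball_self hε, hb⟩
  have hM := iSup_crpWealth_pos hc hratio
  refine tendsto_one_div_mul_log_of_forall_pow_le
    (fun T => (div_le_one (hM T)).2 (setIntegral_crpWealth_le_iSup ν hc.le hratio T))
    fun q hq1 hq0 => ?_
  obtain ⟨m, hm, hmT⟩ := exists_pos_forall_mul_pow_mul_crpWealth_le_setIntegral ν hc hcC hratio
    hsupp hball hq0.le hq1
  refine ⟨m, hm, fun T => (le_div_iff₀ (hM T)).2 ?_⟩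
  rw [Real.mul_iSup_of_nonneg (by positivity)]
  exact ciSup_le fun b => hmT T b b.2

/-- Cover's theorem: for a full-support Borel probability measure `ν` on the closed
`d`-simplex and prices whose one-period ratios lie in `[c, C]`, the universal portfolio
wealth `V_T(ν) = ∫ V_T(b) dν(b)` satisfies `(1/T) log (V_T(ν) / V*_T) → 0`, where
`V*_T = sup_{b} V_T(b)`. -/
theorem stmt_5 (d : ℕ) (hd : 0 < d) (c C : ℝ) (hc : 0 < c) (hcC : c ≤ C)
    (s : Fin d → ℕ → ℝ) (hs : ∀ j t, 0 < s j t)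
    (hratio : ∀ j t, c ≤ s j (t + 1) / s j t ∧ s j (t + 1) / s j t ≤ C)
    (ν : Measure (Fin d → ℝ)) [IsProbabilityMeasure ν]
    (hsupp : ν {b : Fin d → ℝ | ¬ ((∀ j, 0 ≤ b j) ∧ ∑ j, b j = 1)} = 0)
    (hfull : ∀ U : Set (Fin d → ℝ), IsOpen U →
      (U ∩ {b : Fin d → ℝ | (∀ j, 0 ≤ b j) ∧ ∑ j, b j = 1}).Nonempty → 0 < ν U) :
    Filter.Tendsto (fun T : ℕ =>
      (1 / T : ℝ) * Real.log
        ((∫ b in {b : Fin d → ℝ | (∀ j, 0 ≤ b j) ∧ ∑ j, b j = 1},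
            (∏ t ∈ Finset.range T, ∑ j, b j * (s j (t + 1) / s j t)) ∂ν) /
         (⨆ b : {b : Fin d → ℝ // (∀ j, 0 ≤ b j) ∧ ∑ j, b j = 1},
            ∏ t ∈ Finset.range T, ∑ j, (b : Fin d → ℝ) j * (s j (t + 1) / s j t))))
      Filter.atTop (nhds 0) :=
  stmt_5_general d hd c C hc hcC s hratio ν hsupp hfull
end

section
/- (Model-free universal portfolio theorem for Lipschitz maps) Fix M > 0 and a Borel probability measure ν with full support on the compact metric space (𝓛^M, ‖·‖_∞). Define V^M_T(ν) = ∫_{𝓛^M} V^π_T dν(π) and V^{*,M}_T = sup_{π ∈ 𝓛^M} V^π_T. Then for every sequence (μ_t)_{t=0}^∞ in the open simplex Δ^d, lim_{T→∞} (1/T)(log V^{*,M}_T − log V^M_T(ν)) = 0. -/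
open Finset MeasureTheory

noncomputable section

/-- `ℝ^d` with the ℓ¹-norm. -/
abbrev L1 (d : ℕ) := PiLp 1 (fun _ : Fin d => ℝ)

/-- The open unit simplex inside `ℝ^d` with the ℓ¹-norm. -/
def openSimplex (d : ℕ) : Set (L1 d) := {x | (∀ i, 0 < x i) ∧ ∑ i, x i = 1}

/-- The set `𝓛^M` of `M`-Lipschitz maps from `Δ^d` to `Δ̄^d_{M⁻¹}`, as bounded continuous
functions with the sup-ℓ¹-norm. -/
def LM (d : ℕ) (M : ℝ) : Set (BoundedContinuousFunction (openSimplex d) (L1 d)) :=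
  {f | LipschitzWith (Real.toNNReal M) f ∧
    ∀ x : openSimplex d, (∀ i, 1 / (M * d) ≤ f x i) ∧ ∑ i, f x i = 1}

/-!
The wealth `V^π_T` is a product of one-period returns `∑ⱼ πʲ(μ_t) rⱼ`, and every portfolio in
`𝓛^M` puts weight at least `1/(Md)` on each asset, so each `rⱼ` is at most `Md` times the return
of `π`. Hence the return of `π'` is at least `1 - Md ‖π - π'‖` times that of `π`, i.e.
`(1/T) log V^π_T` is equicontinuous in `π`, uniformly in `T`. A Laplace-type argument finishes:
pick `π` with `V^π_T ≥ V^{*}_T / 2`; on the `ε`-ball around it the wealth is at least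
`e^{-ηT} V^{*}_T / 2`, and since `𝓛^M` is totally bounded (Arzelà–Ascoli) and `ν` has full
support, such balls have `ν`-measure bounded below uniformly in the centre. Thus
`log V^{*}_T - log V_T(ν) ≤ ηT + C_η` for every `η > 0`.
-/

open Filter Topology Metric
open scoped NNReal BoundedContinuousFunction

lemma tendsto_one_div_mul_nhds_zero_of_le_mul_add {a : ℕ → ℝ} (h0 : ∀ T, 0 ≤ a T)
    (h : ∀ η > 0, ∃ C, ∀ T, a T ≤ η * T + C) :
    Tendsto (fun T : ℕ => (1 / T : ℝ) * a T) atTop (𝓝 0) := by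
  refine tendsto_order.2 ⟨fun b hb => Eventually.of_forall fun T => ?_, fun ε hε => ?_⟩
  · exact hb.trans_le (mul_nonneg (by positivity) (h0 T))
  obtain ⟨C, hC⟩ := h (ε / 2) (half_pos hε)
  filter_upwards [(tendsto_const_div_atTop_nhds_zero_nat C).eventually
    (gt_mem_nhds (half_pos hε)), eventually_ge_atTop 1] with T hCT hT
  have hT : (0 : ℝ) < T := by exact_mod_cast hT
  calc (1 / T : ℝ) * a T ≤ (1 / T) * (ε / 2 * T + C) := by gcongr; exact hC T
    _ = ε / 2 + C / T := by field_simp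
    _ < ε := by linarith

section Laplace

variable {X : Type*} [MeasurableSpace X] {ν : Measure X} {L : Set X}

lemma integrable_of_bddAbove_image [IsFiniteMeasure ν] {f : X → ℝ} (hL : ∀ᵐ x ∂ν, x ∈ L)
    (hf : AEStronglyMeasurable f ν) (hf0 : ∀ x ∈ L, 0 ≤ f x) (hbdd : BddAbove (f '' L)) :
    Integrable f ν := by
  obtain ⟨C, hC⟩ := hbdd
  exact Integrable.of_bound hf C (hL.mono fun x hx => by
    rw [Real.norm_of_nonneg (hf0 x hx)]; exact hC ⟨x, hx, rfl⟩)

lemma integral_le_iSup_of_ae_mem [IsProbabilityMeasure ν] {f : X → ℝ} (hL : ∀ᵐ x ∂ν, x ∈ L)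
    (hf : Integrable f ν) (hbdd : BddAbove (f '' L)) : ∫ x, f x ∂ν ≤ ⨆ x : L, f x := by
  have hS : BddAbove (Set.range fun x : L => f x) := Set.image_eq_range f L ▸ hbdd
  simpa using integral_mono_ae hf (integrable_const (⨆ x : L, f x))
    (hL.mono fun x hx => le_ciSup hS ⟨x, hx⟩)

variable [PseudoMetricSpace X]

lemma exists_pos_le_measureReal_ball [IsFiniteMeasure ν] (hL : TotallyBounded L)
    (hfull : ∀ U : Set X, IsOpen U → (U ∩ L).Nonempty → 0 < ν U) {ε : ℝ} (hε : 0 < ε) :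
    ∃ δ > 0, ∀ x ∈ L, δ ≤ ν.real (ball x ε) := by
  obtain ⟨t, htL, ht, hLt⟩ := finite_approx_of_totallyBounded hL (ε / 2) (half_pos hε)
  have hpos : ∀ y ∈ t, 0 < ν.real (ball y (ε / 2)) := fun y hy =>
    ENNReal.toReal_pos (hfull _ isOpen_ball ⟨y, mem_ball_self (half_pos hε), htL hy⟩).ne'
      (measure_ne_top ν _)
  have hsmall : ∀ᶠ δ in 𝓝[>] (0 : ℝ), ∀ y ∈ t, δ ≤ ν.real (ball y (ε / 2)) :=
    nhdsWithin_le_nhds <| (eventually_all_finite ht).2 fun y hy =>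
      (eventually_lt_nhds (hpos y hy)).mono fun _ => le_of_lt
  obtain ⟨δ, hδt, hδ⟩ := (hsmall.and self_mem_nhdsWithin).exists
  refine ⟨δ, hδ, fun x hx => ?_⟩
  obtain ⟨y, hy, hxy⟩ := Set.mem_iUnion₂.1 (hLt hx)
  refine (hδt y hy).trans (measureReal_mono fun z hz => ?_)
  rw [mem_ball] at *
  linarith [dist_triangle z y x, dist_comm x y]

variable [OpensMeasurableSpace X]

lemma div_mul_iSup_le_integral [IsFiniteMeasure ν] [NeZero ν] {f : X → ℝ}
    (hL : ∀ᵐ x ∂ν, x ∈ L) (hf : Measurable f) (hpos : ∀ x ∈ L, 0 < f x)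
    (hbdd : BddAbove (f '' L)) {ε a δ : ℝ} (ha : 0 < a) (hδ : ∀ x ∈ L, δ ≤ ν.real (ball x ε))
    (hclose : ∀ x ∈ L, ∀ y ∈ L, dist x y < ε → f x ≤ a * f y) :
    δ / (2 * a) * ⨆ x : L, f x ≤ ∫ x, f x ∂ν := by
  set S := ⨆ x : L, f x
  have hS : BddAbove (Set.range fun x : L => f x) := Set.image_eq_range f L ▸ hbdd
  have hint : Integrable f ν :=
    integrable_of_bddAbove_image hL hf.aestronglyMeasurable (fun x hx => (hpos x hx).le) hbdd
  obtain ⟨x₀, hx₀⟩ : L.Nonempty := hL.exists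
  have : Nonempty L := ⟨⟨x₀, hx₀⟩⟩
  have hS0 : 0 < S := (hpos x₀ hx₀).trans_le (le_ciSup hS ⟨x₀, hx₀⟩)
  obtain ⟨⟨x₁, hx₁⟩, hSx₁⟩ := exists_lt_of_lt_ciSup (half_lt_self hS0)
  have hlow : ∀ᵐ y ∂ν, y ∈ ball x₁ ε → S / (2 * a) ≤ f y := by
    filter_upwards [hL] with y hy hyx
    have := hclose x₁ hx₁ y hy (by rw [dist_comm]; exact hyx)
    rw [div_le_iff₀ (by positivity)]
    nlinarith
  calc δ / (2 * a) * S
      = δ * (S / (2 * a)) := by ring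
    _ ≤ ν.real (ball x₁ ε) * (S / (2 * a)) := by gcongr; exact hδ x₁ hx₁
    _ = ∫ _ in ball x₁ ε, S / (2 * a) ∂ν := by rw [setIntegral_const, smul_eq_mul]
    _ ≤ ∫ y in ball x₁ ε, f y ∂ν :=
        setIntegral_mono_on_ae (integrableOn_const (measure_ne_top ν _)) hint.integrableOn
          measurableSet_ball hlow
    _ ≤ ∫ y, f y ∂ν := setIntegral_le_integral hint (hL.mono fun y hy => (hpos y hy).le)

theorem tendsto_log_iSup_sub_log_setIntegral [IsProbabilityMeasure ν] {V : ℕ → X → ℝ}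
    (hL : TotallyBounded L) (hνL : ν Lᶜ = 0)
    (hfull : ∀ U : Set X, IsOpen U → (U ∩ L).Nonempty → 0 < ν U)
    (hmeas : ∀ T, Measurable (V T)) (hpos : ∀ T, ∀ x ∈ L, 0 < V T x)
    (hbdd : ∀ T, BddAbove (V T '' L))
    (hequi : ∀ η > 0, ∃ ε > 0, ∀ x ∈ L, ∀ y ∈ L, dist x y < ε →
      ∀ T : ℕ, V T x ≤ Real.exp (η * T) * V T y) :
    Tendsto (fun T : ℕ => (1 / T : ℝ) *
      (Real.log (⨆ x : L, V T x) - Real.log (∫ x in L, V T x ∂ν))) atTop (𝓝 0) := by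
  have hae : ∀ᵐ x ∂ν, x ∈ L := ae_iff.2 hνL
  rw [Measure.restrict_eq_self_of_ae_mem hae]
  obtain ⟨x₀, hx₀⟩ : L.Nonempty := hae.exists
  have hS0 : ∀ T, 0 < ⨆ x : L, V T x := fun T => (hpos T x₀ hx₀).trans_le
    (le_ciSup (Set.image_eq_range (V T) L ▸ hbdd T) ⟨x₀, hx₀⟩)
  have hIS : ∀ T, ∫ x, V T x ∂ν ≤ ⨆ x : L, V T x := fun T => integral_le_iSup_of_ae_mem hae
    (integrable_of_bddAbove_image hae (hmeas T).aestronglyMeasurable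
      (fun x hx => (hpos T x hx).le) (hbdd T)) (hbdd T)
  have hlow : ∀ η > 0, ∃ c > 0, ∀ T : ℕ,
      c * Real.exp (-(η * T)) * (⨆ x : L, V T x) ≤ ∫ x, V T x ∂ν := by
    intro η hη
    obtain ⟨ε, hε, hclose⟩ := hequi η hη
    obtain ⟨δ, hδ, hδball⟩ := exists_pos_le_measureReal_ball hL hfull hε
    refine ⟨δ / 2, half_pos hδ, fun T => ?_⟩
    convert div_mul_iSup_le_integral hae (hmeas T) (hpos T) (hbdd T) (Real.exp_pos _) hδball
      fun x hx y hy hxy => hclose x hx y hy hxy T using 2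
    rw [Real.exp_neg]
    ring
  have hI0 : ∀ T, 0 < ∫ x, V T x ∂ν := fun T => by
    obtain ⟨c, hc, hcI⟩ := hlow 1 one_pos
    exact lt_of_lt_of_le (by have := hS0 T; positivity) (hcI T)
  refine tendsto_one_div_mul_nhds_zero_of_le_mul_add
    (fun T => sub_nonneg.2 (Real.log_le_log (hI0 T) (hIS T))) fun η hη => ?_
  obtain ⟨c, hc, hcI⟩ := hlow η hη
  refine ⟨-Real.log c, fun T => ?_⟩
  have := Real.log_le_log (by have := hS0 T; positivity) (hcI T)
  rw [Real.log_mul (by positivity) (hS0 T).ne', Real.log_mul hc.ne' (Real.exp_pos _).ne',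
    Real.log_exp] at this
  linarith

end Laplace

theorem BoundedContinuousFunction.totallyBounded_of_lipschitzWith {α β : Type*}
    [PseudoMetricSpace α] [PseudoMetricSpace β] (hα : TotallyBounded (Set.univ : Set α))
    {B : Set β} (hB : TotallyBounded B) {K : ℝ≥0} {A : Set (α →ᵇ β)}
    (hAK : ∀ f ∈ A, LipschitzWith K f) (hAB : ∀ f ∈ A, ∀ x, f x ∈ B) : TotallyBounded A := by
  classical
  -- Discretize `f` by rounding its values on a `δ`-net of `α` to an `ε / 8`-net of `B`;
  -- by the Lipschitz bound, equal discretizations force `dist f g ≤ ε / 2`.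
  refine totallyBounded_of_finite_discretization fun ε hε => ?_
  set δ : ℝ := ε / 8 / (K + 1)
  have hKδ : K * δ ≤ ε / 8 := by
    rw [mul_div_assoc', div_le_iff₀ (by positivity)]
    nlinarith [K.2]
  obtain ⟨tα, -, htα, hαcov⟩ := finite_approx_of_totallyBounded hα δ (by positivity)
  obtain ⟨tβ, -, htβ, hβcov⟩ := finite_approx_of_totallyBounded hB (ε / 8) (by positivity)
  have := htα.fintype
  have := htβ.fintype
  have hnear : ∀ b : B, ∃ c : tβ, dist (b : β) c < ε / 8 := fun b => by
    obtain ⟨c, hc, hbc⟩ := Set.mem_iUnion₂.1 (hβcov b.2)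
    exact ⟨⟨c, hc⟩, hbc⟩
  choose F hF using hnear
  refine ⟨tα → tβ, inferInstance, fun f a => F ⟨f.1 a, hAB f f.2 a⟩, ?_⟩
  rintro ⟨f, hf⟩ ⟨g, hg⟩ hfg
  have hgrid : ∀ a : tα, dist (f a) (g a) < ε / 4 := fun a => by
    have h : F ⟨f a, hAB f hf a⟩ = F ⟨g a, hAB g hg a⟩ := congr_fun hfg a
    calc dist (f a) (g a)
        ≤ dist (f a) (F ⟨f a, hAB f hf a⟩) + dist (g a) (F ⟨g a, hAB g hg a⟩) := by
          rw [h]; exact dist_triangle_right _ _ _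
      _ < ε / 8 + ε / 8 := add_lt_add (hF ⟨f a, hAB f hf a⟩) (hF ⟨g a, hAB g hg a⟩)
      _ = ε / 4 := by ring
  refine lt_of_le_of_lt ((BoundedContinuousFunction.dist_le (by positivity)).2 fun x => ?_)
    (by linarith : ε / 2 < ε)
  obtain ⟨a, ha, hxa⟩ := Set.mem_iUnion₂.1 (hαcov (Set.mem_univ x))
  have hKxa : K * dist x a ≤ K * δ := by gcongr; exact (mem_ball.1 hxa).le
  calc dist (f x) (g x) ≤ dist (f x) (f a) + dist (g x) (g a) + dist (f a) (g a) :=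
        dist_triangle4_right _ _ _ _
    _ ≤ K * dist x a + K * dist x a + ε / 4 := by
        gcongr
        · exact (hAK f hf).dist_le_mul x a
        · exact (hAK g hg).dist_le_mul x a
        · exact (hgrid ⟨a, ha⟩).le
    _ ≤ ε / 2 := by linarith

lemma one_sub_dist_div_mul_sum_le {d : ℕ} {c : ℝ} (hc : 0 < c) {p q : L1 d} (hp : ∀ j, c ≤ p j)
    {r : Fin d → ℝ} (hr : ∀ j, 0 ≤ r j) :
    (1 - dist p q / c) * ∑ j, p j * r j ≤ ∑ j, q j * r j := by
  set W := ∑ j, p j * r j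
  have hrW : ∀ j, r j ≤ W / c := fun j => by
    rw [le_div_iff₀ hc]
    calc r j * c ≤ p j * r j := by nlinarith [hp j, hr j]
      _ ≤ W := single_le_sum (fun k _ => mul_nonneg (hc.le.trans (hp k)) (hr k)) (mem_univ j)
  have hdiff : W - ∑ j, q j * r j ≤ dist p q * (W / c) := calc
    W - ∑ j, q j * r j = ∑ j, (p j - q j) * r j := by
        rw [← sum_sub_distrib]; simp only [sub_mul]
    _ ≤ ∑ j, |p j - q j| * (W / c) := sum_le_sum fun j _ =>
        (mul_le_mul_of_nonneg_right (le_abs_self _) (hr j)).trans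
          (mul_le_mul_of_nonneg_left (hrW j) (abs_nonneg _))
    _ = dist p q * (W / c) := by simp only [PiLp.dist_eq_of_L1, Real.dist_eq, sum_mul]
  have : (1 - dist p q / c) * W = W - dist p q * (W / c) := by ring
  linarith

lemma norm_eq_one_of_mem_openSimplex {d : ℕ} {x : L1 d} (hx : x ∈ openSimplex d) : ‖x‖ = 1 := by
  rw [PiLp.norm_eq_of_L1, ← hx.2]
  exact sum_congr rfl fun i _ => Real.norm_of_nonneg (hx.1 i).le

lemma totallyBounded_univ_openSimplex (d : ℕ) :
    TotallyBounded (Set.univ : Set (openSimplex d)) := by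
  have hS : TotallyBounded (openSimplex d) :=
    (isCompact_closedBall (0 : L1 d) 1).totallyBounded.subset fun x hx => by
      rw [mem_closedBall, dist_zero_right, norm_eq_one_of_mem_openSimplex hx]
  have := totallyBounded_preimage
    (isUniformEmbedding_subtype_val (p := (· ∈ openSimplex d))).isUniformInducing hS
  rwa [Subtype.coe_preimage_self] at this

section LM

variable {d : ℕ} {M : ℝ} {f : BoundedContinuousFunction (openSimplex d) (L1 d)}

lemma apply_nonneg_of_mem_LM (hM : 0 ≤ M) (hf : f ∈ LM d M) (x : openSimplex d) (i : Fin d) :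
    0 ≤ f x i :=
  (by positivity : (0 : ℝ) ≤ 1 / (M * d)).trans ((hf.2 x).1 i)

lemma apply_le_one_of_mem_LM (hM : 0 ≤ M) (hf : f ∈ LM d M) (x : openSimplex d) (i : Fin d) :
    f x i ≤ 1 :=
  (hf.2 x).2 ▸ single_le_sum (fun j _ => apply_nonneg_of_mem_LM hM hf x j) (mem_univ i)

lemma norm_apply_of_mem_LM (hM : 0 ≤ M) (hf : f ∈ LM d M) (x : openSimplex d) : ‖f x‖ = 1 := by
  rw [PiLp.norm_eq_of_L1, ← (hf.2 x).2]
  exact sum_congr rfl fun i _ => Real.norm_of_nonneg (apply_nonneg_of_mem_LM hM hf x i)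

lemma totallyBounded_LM (hM : 0 ≤ M) : TotallyBounded (LM d M) :=
  BoundedContinuousFunction.totallyBounded_of_lipschitzWith (totallyBounded_univ_openSimplex d)
    (isCompact_closedBall (0 : L1 d) 1).totallyBounded (fun _ hf => hf.1)
    fun _ hf x => by rw [mem_closedBall, dist_zero_right, norm_apply_of_mem_LM hM hf]

end LM

lemma apply_div_apply_pos {d : ℕ} (x y : openSimplex d) (j : Fin d) :
    0 < (y : L1 d) j / (x : L1 d) j :=
  div_pos (y.2.1 j) (x.2.1 j)

def periodReturn {d : ℕ} (π : BoundedContinuousFunction (openSimplex d) (L1 d))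
    (x y : openSimplex d) : ℝ :=
  ∑ j, π x j * ((y : L1 d) j / (x : L1 d) j)

def portfolioValue {d : ℕ} (μ : ℕ → openSimplex d) (T : ℕ)
    (π : BoundedContinuousFunction (openSimplex d) (L1 d)) : ℝ :=
  ∏ t ∈ range T, periodReturn π (μ t) (μ (t + 1))

section portfolioValue

variable {d : ℕ} {M : ℝ} {π π' : BoundedContinuousFunction (openSimplex d) (L1 d)}

lemma periodReturn_nonneg (hM : 0 ≤ M) (hπ : π ∈ LM d M) (x y : openSimplex d) :
    0 ≤ periodReturn π x y :=
  sum_nonneg fun j _ =>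
    mul_nonneg (apply_nonneg_of_mem_LM hM hπ x j) (apply_div_apply_pos x y j).le

lemma periodReturn_pos (hd : 0 < d) (hM : 0 < M) (hπ : π ∈ LM d M) (x y : openSimplex d) :
    0 < periodReturn π x y := by
  have : Nonempty (Fin d) := ⟨⟨0, hd⟩⟩
  exact sum_pos (fun j _ => mul_pos ((by positivity : (0 : ℝ) < 1 / (M * d)).trans_le
    ((hπ.2 x).1 j)) (apply_div_apply_pos x y j)) univ_nonempty

lemma periodReturn_le (hM : 0 ≤ M) (hπ : π ∈ LM d M) (x y : openSimplex d) :
    periodReturn π x y ≤ ∑ j, (y : L1 d) j / (x : L1 d) j :=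
  sum_le_sum fun j _ =>
    mul_le_of_le_one_left (apply_div_apply_pos x y j).le (apply_le_one_of_mem_LM hM hπ x j)

lemma one_sub_mul_dist_mul_periodReturn_le (hd : 0 < d) (hM : 0 < M) (hπ : π ∈ LM d M)
    (x y : openSimplex d) :
    (1 - M * d * dist π π') * periodReturn π x y ≤ periodReturn π' x y := by
  have hMd : 0 < M * d := by positivity
  have hdist : dist (π x) (π' x) / (1 / (M * d)) ≤ M * d * dist π π' := by
    rw [div_div_eq_mul_div, div_one, mul_comm]
    gcongr
    exact BoundedContinuousFunction.dist_coe_le_dist x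
  calc (1 - M * d * dist π π') * periodReturn π x y
      ≤ (1 - dist (π x) (π' x) / (1 / (M * d))) * periodReturn π x y := by
        gcongr; exact periodReturn_nonneg hM.le hπ x y
    _ ≤ periodReturn π' x y := one_sub_dist_div_mul_sum_le (one_div_pos.2 hMd) (hπ.2 x).1
        fun j => (apply_div_apply_pos x y j).le

variable (μ : ℕ → openSimplex d) (T : ℕ)

lemma continuous_portfolioValue : Continuous (portfolioValue μ T) := by
  unfold portfolioValue periodReturn
  fun_prop

lemma portfolioValue_pos (hd : 0 < d) (hM : 0 < M) (hπ : π ∈ LM d M) :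
    0 < portfolioValue μ T π :=
  prod_pos fun _ _ => periodReturn_pos hd hM hπ _ _

lemma bddAbove_portfolioValue_image (hM : 0 ≤ M) : BddAbove (portfolioValue μ T '' LM d M) := by
  refine ⟨∏ t ∈ range T, ∑ j, (μ (t + 1) : L1 d) j / (μ t : L1 d) j, ?_⟩
  rintro _ ⟨π, hπ, rfl⟩
  exact prod_le_prod (fun _ _ => periodReturn_nonneg hM hπ _ _)
    fun _ _ => periodReturn_le hM hπ _ _

lemma exists_portfolioValue_le_exp_mul (hd : 0 < d) (hM : 0 < M) {η : ℝ} (hη : 0 < η) :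
    ∃ ε > 0, ∀ π ∈ LM d M, ∀ π' ∈ LM d M, dist π π' < ε →
      ∀ T : ℕ, portfolioValue μ T π ≤ Real.exp (η * T) * portfolioValue μ T π' := by
  have hMd : 0 < M * d := by positivity
  -- `ε` is chosen so that `1 - M d ε = e^{-η}`.
  refine ⟨(1 - Real.exp (-η)) / (M * d), div_pos (by simp [hη]) hMd,
    fun π hπ π' _ hdist T => ?_⟩
  have hstep : ∀ t, Real.exp (-η) * periodReturn π (μ t) (μ (t + 1))
      ≤ periodReturn π' (μ t) (μ (t + 1)) := fun t => by
    refine le_trans ?_ (one_sub_mul_dist_mul_periodReturn_le hd hM hπ _ _)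
    gcongr
    · exact periodReturn_nonneg hM.le hπ _ _
    · rw [lt_div_iff₀ hMd] at hdist
      linarith
  have hprod := prod_le_prod (s := range T)
    (fun t _ => mul_nonneg (Real.exp_pos _).le (periodReturn_nonneg hM.le hπ _ _))
    fun t _ => hstep t
  rw [prod_mul_distrib, prod_const, card_range, ← Real.exp_nat_mul] at hprod
  rw [← inv_mul_le_iff₀ (Real.exp_pos _), ← Real.exp_neg, ← neg_mul, mul_comm (-η)]
  exact hprod

end portfolioValue

/-- Model-free universal portfolio theorem for Lipschitz portfolio maps: for any
full-support Borel probability measure `ν` on `𝓛^M` and every trajectory `(μ_t)` in the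
open simplex, `(1/T)(log V^{*,M}_T - log V^M_T(ν)) → 0`, where
`V^M_T(ν) = ∫ V^π_T dν(π)` and `V^{*,M}_T = sup_{π ∈ 𝓛^M} V^π_T`. -/
theorem stmt_9 (d : ℕ) (hd : 0 < d) (M : ℝ) (hM : 0 < M)
    [MeasurableSpace (BoundedContinuousFunction (openSimplex d) (L1 d))]
    [BorelSpace (BoundedContinuousFunction (openSimplex d) (L1 d))]
    (ν : Measure (BoundedContinuousFunction (openSimplex d) (L1 d)))
    [IsProbabilityMeasure ν]
    (hsupp : ν (LM d M)ᶜ = 0)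
    (hfull : ∀ U : Set (BoundedContinuousFunction (openSimplex d) (L1 d)),
      IsOpen U → (U ∩ LM d M).Nonempty → 0 < ν U)
    (μ : ℕ → openSimplex d) :
    Filter.Tendsto (fun T : ℕ =>
      (1 / T : ℝ) *
        (Real.log (⨆ π : LM d M,
            ∏ t ∈ Finset.range T,
              ∑ j, (π : BoundedContinuousFunction (openSimplex d) (L1 d)) (μ t) j
                * ((μ (t + 1) : L1 d) j / (μ t : L1 d) j))
          - Real.log (∫ π in LM d M,
              (∏ t ∈ Finset.range T,
                ∑ j, π (μ t) j * ((μ (t + 1) : L1 d) j / (μ t : L1 d) j)) ∂ν)))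
      Filter.atTop (nhds 0) := by
  exact tendsto_log_iSup_sub_log_setIntegral (V := portfolioValue μ) (totallyBounded_LM hM.le)
    hsupp hfull
    (fun T => (continuous_portfolioValue μ T).measurable)
    (fun T _ hπ => portfolioValue_pos μ T hd hM hπ)
    (fun T => bddAbove_portfolioValue_image μ T hM.le)
    (fun _ hη => exists_portfolioValue_le_exp_mul μ hd hM hη)
end
end

section
/- Let ρ(x,·) be a transition kernel on the open simplex and let π̂(x) ∈ Δ̄^d maximize p ↦ ∫ log⟨p, y/x⟩ ρ(x,dy) over the closed simplex. Then for every measurable portfolio map π: Δ^d → Δ̄^d and every x ∈ Δ^d, ∫ (⟨π(x), y/x⟩ / ⟨π̂(x), y/x⟩) ρ(x,dy) ≤ 1. -/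
/-!
Write `a = ⟨π, y/x⟩`, `b = ⟨π̂, y/x⟩` and `m_α = α a + (1 - α) b` for the wealth of the mixed
portfolio `π^α`. The inequality `log t ≤ t - 1` at `t = b / m_α` gives pointwise
`a / m_α ≤ 1 + (1 - α) / α · (log m_α - log b)`, so log-optimality of `π̂` against `π^α` yields
`∫ a / m_α ≤ 1` for every `α ∈ (0, 1)`. As `α → 0`, `a / m_α → a / b`, and Fatou's lemma concludes.
Since `y` and `x` lie in the simplex, `a` is bounded, which makes every `log m_α` integrable.
-/

open Finset MeasureTheory Filter Topology

section

open Real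

lemma div_combo_le_one_add_mul_log_sub {α a b : ℝ} (hα : 0 < α) (hα1 : α < 1)
    (ha : 0 ≤ a) (hb : 0 < b) :
    a / (α * a + (1 - α) * b)
      ≤ 1 + (1 - α) / α * (log (α * a + (1 - α) * b) - log b) := by
  set m := α * a + (1 - α) * b
  have hm : 0 < m := by positivity
  have hlog : α * (a - b) / m ≤ log m - log b := by
    have h := log_le_sub_one_of_pos (div_pos hb hm)
    rw [log_div hb.ne' hm.ne'] at h
    have : b / m - 1 = -(α * (a - b) / m) := by field_simp; ring
    linarith
  have hdiv : a / m - 1 = (1 - α) / α * (α * (a - b) / m) := by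
    field_simp; ring
  have : (1 - α) / α * (α * (a - b) / m) ≤ (1 - α) / α * (log m - log b) :=
    mul_le_mul_of_nonneg_left hlog (div_nonneg (by linarith) hα.le)
  linarith

lemma abs_log_combo_le {α a b M : ℝ} (hα : 0 ≤ α) (hα1 : α < 1) (ha : 0 ≤ a) (haM : a ≤ M)
    (hb : 0 < b) :
    |log (α * a + (1 - α) * b)| ≤ |log (1 - α)| + |log M| + |log b| := by
  have hm : (1 - α) * b ≤ α * a + (1 - α) * b := by nlinarith
  have hmax : α * a + (1 - α) * b ≤ max M b := by
    nlinarith [le_max_left M b, le_max_right M b]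
  have hlow : log (1 - α) + log b ≤ log (α * a + (1 - α) * b) := by
    rw [← log_mul (by linarith) hb.ne']
    exact log_le_log (by nlinarith) hm
  have hup : log (α * a + (1 - α) * b) ≤ |log M| + |log b| := by
    refine (log_le_log (by nlinarith) hmax).trans ?_
    rcases max_choice M b with h | h <;> rw [h] <;>
      linarith [le_abs_self (log M), le_abs_self (log b), abs_nonneg (log M), abs_nonneg (log b)]
  rw [abs_le]
  constructor <;>
    linarith [neg_abs_le (log (1 - α)), neg_abs_le (log b), abs_nonneg (log (1 - α)),
      abs_nonneg (log M)]

lemma tendsto_div_combo (a : ℝ) {b : ℝ} (hb : b ≠ 0) :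
    Tendsto (fun α => a / (α * a + (1 - α) * b)) (𝓝 0) (𝓝 (a / b)) := by
  have h : Tendsto (fun α : ℝ => α * a + (1 - α) * b) (𝓝 0) (𝓝 b) := by
    simpa using (by fun_prop : Continuous fun α : ℝ => α * a + (1 - α) * b).tendsto 0
  exact tendsto_const_nhds.div h hb

variable {Ω : Type*} [MeasurableSpace Ω] {μ : Measure Ω} {a b : Ω → ℝ} {α : ℝ}

lemma lintegral_le_of_ae_tendsto {ι : Type*} {u : Filter ι} [u.NeBot] [u.IsCountablyGenerated]
    {f : ι → Ω → ENNReal} {g : Ω → ENNReal} {C : ENNReal} (hf : ∀ i, AEMeasurable (f i) μ)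
    (hlim : ∀ᵐ ω ∂μ, Tendsto (fun i => f i ω) u (𝓝 (g ω)))
    (hC : ∀ᶠ i in u, ∫⁻ ω, f i ω ∂μ ≤ C) :
    ∫⁻ ω, g ω ∂μ ≤ C :=
  calc ∫⁻ ω, g ω ∂μ = ∫⁻ ω, liminf (fun i => f i ω) u ∂μ :=
        lintegral_congr_ae (hlim.mono fun _ h => h.liminf_eq.symm)
    _ ≤ liminf (fun i => ∫⁻ ω, f i ω ∂μ) u := lintegral_liminf_le' hf
    _ ≤ C := liminf_le_of_frequently_le' hC.frequently

lemma integrable_log_combo [IsFiniteMeasure μ] {M : ℝ} (ha : AEMeasurable a μ)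
    (hb : AEMeasurable b μ) (ha0 : ∀ᵐ ω ∂μ, 0 ≤ a ω) (haM : ∀ᵐ ω ∂μ, a ω ≤ M)
    (hb0 : ∀ᵐ ω ∂μ, 0 < b ω) (hlogb : Integrable (fun ω => log (b ω)) μ)
    (hα : 0 ≤ α) (hα1 : α < 1) :
    Integrable (fun ω => log (α * a ω + (1 - α) * b ω)) μ := by
  refine ((integrable_const (|log (1 - α)| + |log M|)).add hlogb.abs).mono'
    (measurable_log.comp_aemeasurable (by fun_prop)).aestronglyMeasurable ?_
  filter_upwards [ha0, haM, hb0] with ω ha0 haM hb0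
  exact abs_log_combo_le hα hα1 ha0 haM hb0

lemma lintegral_ofReal_div_combo_le_one [IsProbabilityMeasure μ]
    (ha0 : ∀ᵐ ω ∂μ, 0 ≤ a ω) (hb0 : ∀ᵐ ω ∂μ, 0 < b ω) (hα : 0 < α) (hα1 : α < 1)
    (hlogb : Integrable (fun ω => log (b ω)) μ)
    (hlogm : Integrable (fun ω => log (α * a ω + (1 - α) * b ω)) μ)
    (hopt : ∫ ω, log (α * a ω + (1 - α) * b ω) ∂μ ≤ ∫ ω, log (b ω) ∂μ) :
    ∫⁻ ω, ENNReal.ofReal (a ω / (α * a ω + (1 - α) * b ω)) ∂μ ≤ 1 := by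
  set k := (1 - α) / α
  have hk : 0 ≤ k := div_nonneg (by linarith) hα.le
  have hD : Integrable (fun ω => k * (log (α * a ω + (1 - α) * b ω) - log (b ω))) μ :=
    (hlogm.sub hlogb).const_mul k
  have hFint : Integrable (fun ω => 1 + k * (log (α * a ω + (1 - α) * b ω) - log (b ω))) μ :=
    (integrable_const 1).add hD
  have hF : ∀ᵐ ω ∂μ, a ω / (α * a ω + (1 - α) * b ω)
      ≤ 1 + k * (log (α * a ω + (1 - α) * b ω) - log (b ω)) := by
    filter_upwards [ha0, hb0] with ω ha0 hb0
    exact div_combo_le_one_add_mul_log_sub hα hα1 ha0 hb0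
  have hF0 : ∀ᵐ ω ∂μ, 0 ≤ 1 + k * (log (α * a ω + (1 - α) * b ω) - log (b ω)) := by
    filter_upwards [ha0, hb0, hF] with ω ha0 hb0 hF
    exact (div_nonneg ha0 (by nlinarith)).trans hF
  calc ∫⁻ ω, ENNReal.ofReal (a ω / (α * a ω + (1 - α) * b ω)) ∂μ
      ≤ ∫⁻ ω, ENNReal.ofReal (1 + k * (log (α * a ω + (1 - α) * b ω) - log (b ω))) ∂μ :=
        lintegral_mono_ae (hF.mono fun _ h => ENNReal.ofReal_le_ofReal h)
    _ = ENNReal.ofReal (1 + k * (∫ ω, log (α * a ω + (1 - α) * b ω) ∂μ - ∫ ω, log (b ω) ∂μ)) := by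
        rw [← ofReal_integral_eq_lintegral_ofReal hFint hF0,
          integral_add (integrable_const 1) hD, integral_const_mul, integral_sub hlogm hlogb,
          integral_const, probReal_univ, one_smul]
    _ ≤ ENNReal.ofReal 1 := ENNReal.ofReal_le_ofReal (by nlinarith)
    _ = 1 := ENNReal.ofReal_one

theorem lintegral_ofReal_div_le_one_of_log_combo_le [IsProbabilityMeasure μ] {M : ℝ}
    (ha : AEMeasurable a μ) (hb : AEMeasurable b μ) (ha0 : ∀ᵐ ω ∂μ, 0 ≤ a ω)
    (haM : ∀ᵐ ω ∂μ, a ω ≤ M) (hb0 : ∀ᵐ ω ∂μ, 0 < b ω)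
    (hlogb : Integrable (fun ω => log (b ω)) μ)
    (hopt : ∀ α, 0 < α → α < 1 →
      ∫ ω, log (α * a ω + (1 - α) * b ω) ∂μ ≤ ∫ ω, log (b ω) ∂μ) :
    ∫⁻ ω, ENNReal.ofReal (a ω / b ω) ∂μ ≤ 1 := by
  refine lintegral_le_of_ae_tendsto (u := 𝓝[>] (0 : ℝ))
    (f := fun α ω => ENNReal.ofReal (a ω / (α * a ω + (1 - α) * b ω))) (fun α => by fun_prop) ?_ ?_
  · filter_upwards [hb0] with ω hb0
    exact (ENNReal.continuous_ofReal.tendsto _).comp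
      ((tendsto_div_combo (a ω) hb0.ne').mono_left nhdsWithin_le_nhds)
  · filter_upwards [Ioo_mem_nhdsGT one_pos] with α ⟨hα, hα1⟩
    exact lintegral_ofReal_div_combo_le_one ha0 hb0 hα hα1 hlogb
      (integrable_log_combo ha hb ha0 haM hb0 hlogb hα.le hα1) (hopt α hα hα1)

end

section

variable {ι : Type*} [Fintype ι] {p w : ι → ℝ}

lemma dotProduct_pos_of_mem_stdSimplex (hp : p ∈ stdSimplex ℝ ι) (hw : ∀ i, 0 < w i) :
    0 < p ⬝ᵥ w := by
  obtain ⟨i, -, hi⟩ := exists_lt_of_sum_lt (s := univ) (f := 0) (g := p) (by simp [hp.2])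
  exact sum_pos' (fun j _ => mul_nonneg (hp.1 j) (hw j).le) ⟨i, mem_univ i, mul_pos hi (hw i)⟩

lemma dotProduct_le_of_mem_stdSimplex {C : ℝ} (hp : p ∈ stdSimplex ℝ ι) (hw : ∀ i, w i ≤ C) :
    p ⬝ᵥ w ≤ C :=
  calc p ⬝ᵥ w ≤ ∑ i, p i * C := sum_le_sum fun i _ => mul_le_mul_of_nonneg_left (hw i) (hp.1 i)
    _ = C := by rw [← sum_mul, hp.2, one_mul]

end

theorem stmt_11_general (d : ℕ)
    (ρ : (Fin d → ℝ) → Measure (Fin d → ℝ))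
    (hρprob : ∀ x, IsProbabilityMeasure (ρ x))
    (hρsupp : ∀ x, ρ x {y : Fin d → ℝ | ¬ ((∀ j, 0 < y j) ∧ ∑ j, y j = 1)} = 0)
    (π πhat : (Fin d → ℝ) → (Fin d → ℝ))
    (hπval : ∀ x : Fin d → ℝ, (∀ j, 0 ≤ π x j) ∧ ∑ j, π x j = 1)
    (x : Fin d → ℝ) (hx : (∀ j, 0 < x j) ∧ ∑ j, x j = 1)
    (hπhatval : (∀ j, 0 ≤ πhat x j) ∧ ∑ j, πhat x j = 1)
    (hint : Integrable (fun y => Real.log (∑ j, πhat x j * (y j / x j))) (ρ x))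
    (hopt : ∀ p : Fin d → ℝ, ((∀ j, 0 ≤ p j) ∧ ∑ j, p j = 1) →
      ∫ y, Real.log (∑ j, p j * (y j / x j)) ∂ρ x
        ≤ ∫ y, Real.log (∑ j, πhat x j * (y j / x j)) ∂ρ x) :
    ∫⁻ y, ENNReal.ofReal
        ((∑ j, π x j * (y j / x j)) / (∑ j, πhat x j * (y j / x j))) ∂ρ x ≤ 1 := by
  have := hρprob x
  have hratio : ∀ᵐ y ∂ρ x, ∀ j, 0 < (y / x) j ∧ (y / x) j ≤ ∑ k, (x k)⁻¹ := by
    filter_upwards [ae_iff.mpr (hρsupp x)] with y hy j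
    refine ⟨div_pos (hy.1 j) (hx.1 j), ?_⟩
    have hy1 : y j ≤ 1 := (mem_Icc_of_mem_stdSimplex ⟨fun k => (hy.1 k).le, hy.2⟩ j).2
    calc y j / x j ≤ (x j)⁻¹ := (div_le_div_of_nonneg_right hy1 (hx.1 j).le).trans_eq (one_div _)
      _ ≤ ∑ k, (x k)⁻¹ := single_le_sum (fun k _ => (inv_pos.mpr (hx.1 k)).le) (mem_univ j)
  refine lintegral_ofReal_div_le_one_of_log_combo_le (a := fun y => π x ⬝ᵥ (y / x))
    (b := fun y => πhat x ⬝ᵥ (y / x)) (M := ∑ k, (x k)⁻¹) (by fun_prop) (by fun_prop) ?_ ?_ ?_ hint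
    fun α hα hα1 => ?_
  · filter_upwards [hratio] with y hy
    exact dotProduct_nonneg_of_nonneg (hπval x).1 fun j => (hy j).1.le
  · filter_upwards [hratio] with y hy
    exact dotProduct_le_of_mem_stdSimplex (hπval x) fun j => (hy j).2
  · filter_upwards [hratio] with y hy
    exact dotProduct_pos_of_mem_stdSimplex hπhatval fun j => (hy j).1
  · have hmix := convex_stdSimplex ℝ (Fin d) (hπval x) hπhatval hα.le (sub_nonneg.mpr hα1.le)
      (add_sub_cancel α 1)
    have h : ∫ y, Real.log ((α • π x + (1 - α) • πhat x) ⬝ᵥ (y / x)) ∂ρ x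
        ≤ ∫ y, Real.log (πhat x ⬝ᵥ (y / x)) ∂ρ x := hopt _ hmix
    simpa only [add_dotProduct, smul_dotProduct, smul_eq_mul] using h

/-- If `π̂(x)` maximizes `p ↦ ∫ log⟨p, y/x⟩ ρ(x,dy)` over the closed simplex, then for any
measurable portfolio map `π` with values in the closed simplex and any `x` in the open
simplex, `∫ ⟨π(x), y/x⟩ / ⟨π̂(x), y/x⟩ ρ(x,dy) ≤ 1`. -/
theorem stmt_11 (d : ℕ) (hd : 0 < d)
    (ρ : (Fin d → ℝ) → Measure (Fin d → ℝ))
    (hρprob : ∀ x, IsProbabilityMeasure (ρ x))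
    (hρsupp : ∀ x, ρ x {y : Fin d → ℝ | ¬ ((∀ j, 0 < y j) ∧ ∑ j, y j = 1)} = 0)
    (π πhat : (Fin d → ℝ) → (Fin d → ℝ)) (hπmeas : Measurable π)
    (hπval : ∀ x : Fin d → ℝ, (∀ j, 0 ≤ π x j) ∧ ∑ j, π x j = 1)
    (x : Fin d → ℝ) (hx : (∀ j, 0 < x j) ∧ ∑ j, x j = 1)
    (hπhatval : (∀ j, 0 ≤ πhat x j) ∧ ∑ j, πhat x j = 1)
    (hint : Integrable (fun y => Real.log (∑ j, πhat x j * (y j / x j))) (ρ x))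
    (hopt : ∀ p : Fin d → ℝ, ((∀ j, 0 ≤ p j) ∧ ∑ j, p j = 1) →
      ∫ y, Real.log (∑ j, p j * (y j / x j)) ∂ρ x
        ≤ ∫ y, Real.log (∑ j, πhat x j * (y j / x j)) ∂ρ x) :
    ∫⁻ y, ENNReal.ofReal
        ((∑ j, π x j * (y j / x j)) / (∑ j, πhat x j * (y j / x j))) ∂ρ x ≤ 1 :=
  stmt_11_general d ρ hρprob hρsupp π πhat hπval x hx hπhatval hint hopt
end

section
/- Fix T, M, α > 0 and a continuous path (μ_t) in the open simplex admitting a continuous quadratic variation [μ]. Then the map G ↦ V^G_T given by Fernholz's master equation V^G_T = (G(μ_T)/G(μ_0)) exp(−∫_0^T Σ_{i,j} D^{ij}G(μ_t)/(2G(μ_t)) d[μ^i,μ^j]_t) is continuous from (𝓖^{M,α}, ‖·‖_{C^{2,0}}) to ℝ, and in fact |log V^G_T − log V^{G̃}_T| ≤ 2M‖G−G̃‖_{C^{2,0}} + ((M/2)d² + (M³/2)d²)‖G−G̃‖_{C^{2,0}} max_i [μ^i,μ^i]_T. -/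
open Finset MeasureTheory

noncomputable section

/-- Second partial derivative `D^{ij} G (x)`. -/
def D2 (d : ℕ) (G : (Fin d → ℝ) → ℝ) (x : Fin d → ℝ) (i j : Fin d) : ℝ :=
  fderiv ℝ (fderiv ℝ G) x (Pi.single i 1) (Pi.single j 1)

/-- Log-wealth of the functionally generated portfolio of `G` via Fernholz's master
equation, where the quadratic covariations `[μ^i, μ^j]` are represented as
`[μ^i, μ^j]_T = ∫_{[0,T]} c_t^{ij} d𝔪(t)` for a positive-semidefinite matrix-valued
density `c` with respect to a measure `𝔪` on `[0,∞)`. -/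
def logWealth (d : ℕ) (G : (Fin d → ℝ) → ℝ) (μ : ℝ → Fin d → ℝ)
    (𝔪 : Measure ℝ) (c : ℝ → Matrix (Fin d) (Fin d) ℝ) (T : ℝ) : ℝ :=
  Real.log (G (μ T)) - Real.log (G (μ 0))
    - ∫ t in Set.Icc 0 T, (∑ i, ∑ j, D2 d G (μ t) i j * c t i j / (2 * G (μ t))) ∂𝔪

/-!
The two boundary terms `log G(μ_T)` and `log G(μ_0)` move by at most `M ‖G - G̃‖` each,
since `log` is `M`-Lipschitz on `[1/M, ∞)`. In the integral term, each summand
`D^{ij}G / G - D^{ij}G̃ / G̃ = (D^{ij}G - D^{ij}G̃) / G + D^{ij}G̃ (G̃ - G) / (G̃ G)` is at most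
`(M + M³) ‖G - G̃‖`, and positive semidefiniteness of the covariation density gives
`|c^{ij}| ≤ (c^{ii} + c^{jj}) / 2`, so that `Σ_{i,j} |c^{ij}| ≤ d Σ_i c^{ii}`; integrating and
bounding each `[μ^i, μ^i]_T` by their maximum yields the estimate.
-/

lemma abs_log_sub_log_le_mul {M a b : ℝ} (hM : 0 < M) (ha : 1 / M ≤ a) (hb : 1 / M ≤ b) :
    |Real.log a - Real.log b| ≤ M * |a - b| := by
  have key : ∀ {x y : ℝ}, 1 / M ≤ x → 1 / M ≤ y → Real.log x - Real.log y ≤ M * |x - y| := by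
    intro x y hx hy
    have hx0 : 0 < x := (one_div_pos.2 hM).trans_le hx
    have hy0 : 0 < y := (one_div_pos.2 hM).trans_le hy
    have hMy : 1 ≤ M * y := by rwa [div_le_iff₀' hM] at hy
    calc Real.log x - Real.log y = Real.log (x / y) := (Real.log_div hx0.ne' hy0.ne').symm
      _ ≤ x / y - 1 := Real.log_le_sub_one_of_pos (div_pos hx0 hy0)
      _ = (x - y) / y := by field_simp
      _ ≤ M * |x - y| := by
        rw [div_le_iff₀ hy0]
        nlinarith [le_abs_self (x - y), abs_nonneg (x - y)]
  rw [abs_sub_le_iff]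
  exact ⟨key ha hb, abs_sub_comm a b ▸ key hb ha⟩

lemma abs_div_sub_div_le {M K N a b g h : ℝ} (hM : 0 < M) (hg : 1 / M ≤ g) (hh : 1 / M ≤ h)
    (hb : |b| ≤ K) (hab : |a - b| ≤ N) (hgh : |g - h| ≤ N) :
    |a / g - b / h| ≤ M * N + K * M ^ 2 * N := by
  have hg0 : 0 < g := (one_div_pos.2 hM).trans_le hg
  have hh0 : 0 < h := (one_div_pos.2 hM).trans_le hh
  have hMg : 1 ≤ M * g := by rwa [div_le_iff₀' hM] at hg
  have hMh : 1 ≤ M * h := by rwa [div_le_iff₀' hM] at hh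
  have hN : 0 ≤ N := (abs_nonneg _).trans hab
  have hK : 0 ≤ K := (abs_nonneg _).trans hb
  have hsplit : a / g - b / h = (a - b) / g + b * (h - g) / (g * h) := by
    field_simp
    ring
  have hfirst : |(a - b) / g| ≤ M * N := by
    rw [abs_div, abs_of_pos hg0, div_le_iff₀ hg0]
    nlinarith
  have hsecond : |b * (h - g) / (g * h)| ≤ K * M ^ 2 * N := by
    rw [abs_div, abs_mul, abs_of_pos (mul_pos hg0 hh0), div_le_iff₀ (mul_pos hg0 hh0),
      abs_sub_comm]
    have hMgh : 1 ≤ (M * g) * (M * h) := one_le_mul_of_one_le_of_one_le hMg hMh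
    calc |b| * |g - h| ≤ K * N := mul_le_mul hb hgh (abs_nonneg _) hK
      _ ≤ K * N * ((M * g) * (M * h)) := le_mul_of_one_le_right (mul_nonneg hK hN) hMgh
      _ = K * M ^ 2 * N * (g * h) := by ring
  rw [hsplit]
  exact (abs_add_le _ _).trans (add_le_add hfirst hsecond)

namespace Matrix.PosSemidef

variable {n : Type*} [Fintype n] [DecidableEq n] {A : Matrix n n ℝ}

lemma abs_apply_le (hA : A.PosSemidef) (i j : n) : |A i j| ≤ (A i i + A j j) / 2 := by
  have hsymm : A j i = A i j := hA.1.apply i j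
  -- the quadratic form of `A` at `e_i ± e_j` is `A i i + A j j ± 2 A i j ≥ 0`
  have hplus := hA.dotProduct_mulVec_nonneg (Pi.single i 1 + Pi.single j 1)
  have hminus := hA.dotProduct_mulVec_nonneg (Pi.single i 1 - Pi.single j 1)
  simp only [star_trivial, mulVec_add, mulVec_sub, mulVec_single, add_dotProduct,
    sub_dotProduct, single_dotProduct, Pi.add_apply, Pi.sub_apply, one_mul,
    MulOpposite.op_one, one_smul, col_apply] at hplus hminus
  rw [abs_le]
  constructor <;> linarith

lemma sum_sum_abs_apply_le (hA : A.PosSemidef) :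
    ∑ i, ∑ j, |A i j| ≤ Fintype.card n * ∑ i, A i i := by
  calc ∑ i, ∑ j, |A i j| ≤ ∑ i, ∑ j, (A i i + A j j) / 2 := by
        gcongr with i _ j _
        exact hA.abs_apply_le i j
    _ = Fintype.card n * ∑ i, A i i := by
        simp only [add_div, sum_add_distrib, sum_const, card_univ, nsmul_eq_mul, ← sum_div,
          ← mul_sum]
        ring

end Matrix.PosSemidef

section SecondDerivative

variable {d : ℕ}

lemma D2_eq_iteratedFDeriv (f : (Fin d → ℝ) → ℝ) (x : Fin d → ℝ) (i j : Fin d) :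
    D2 d f x i j = iteratedFDeriv ℝ 2 f x ![Pi.single i 1, Pi.single j 1] := by
  rw [iteratedFDeriv_two_apply]
  simp [D2]

lemma abs_D2_le_norm_iteratedFDeriv (f : (Fin d → ℝ) → ℝ) (x : Fin d → ℝ) (i j : Fin d) :
    |D2 d f x i j| ≤ ‖iteratedFDeriv ℝ 2 f x‖ := by
  rw [D2_eq_iteratedFDeriv, ← Real.norm_eq_abs]
  refine ((iteratedFDeriv ℝ 2 f x).le_opNorm _).trans_eq ?_
  simp [Fin.prod_univ_two, Pi.norm_single]

lemma D2_sub {G Gt : (Fin d → ℝ) → ℝ} {x : Fin d → ℝ} (hG : ContDiffAt ℝ 2 G x)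
    (hGt : ContDiffAt ℝ 2 Gt x) (i j : Fin d) :
    D2 d (fun z => G z - Gt z) x i j = D2 d G x i j - D2 d Gt x i j := by
  simp only [D2_eq_iteratedFDeriv]
  rw [← Pi.sub_def, iteratedFDeriv_sub_apply (i := 2) hG hGt]
  rfl

end SecondDerivative

lemma sum_le_card_mul_ciSup {ι : Type*} [Fintype ι] (f : ι → ℝ) :
    ∑ i, f i ≤ Fintype.card ι * ⨆ i, f i :=
  (sum_le_card_nsmul _ _ _ fun i _ => le_ciSup (Set.finite_range f).bddAbove i).trans_eq
    (by simp)

lemma abs_integral_sub_le_of_abs_sub_le {α : Type*} [MeasurableSpace α] {ν : Measure α}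
    {f g b : α → ℝ} (hf : Integrable f ν) (hg : Integrable g ν) (hb : Integrable b ν)
    (hfg : ∀ x, |f x - g x| ≤ b x) :
    |∫ x, f x ∂ν - ∫ x, g x ∂ν| ≤ ∫ x, b x ∂ν := by
  rw [← integral_sub hf hg]
  exact norm_integral_le_of_norm_le hb
    (ae_of_all _ fun x => (Real.norm_eq_abs _).trans_le (hfg x))

def masterIntegrand (d : ℕ) (G : (Fin d → ℝ) → ℝ) (x : Fin d → ℝ)
    (C : Matrix (Fin d) (Fin d) ℝ) : ℝ :=
  ∑ i, ∑ j, D2 d G x i j * C i j / (2 * G x)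

lemma abs_masterIntegrand_sub_le {d : ℕ} {G Gt : (Fin d → ℝ) → ℝ} {x : Fin d → ℝ}
    {C : Matrix (Fin d) (Fin d) ℝ} {M N : ℝ} (hM : 0 < M)
    (hG : ContDiffAt ℝ 2 G x) (hGt : ContDiffAt ℝ 2 Gt x)
    (hGlow : 1 / M ≤ G x) (hGtlow : 1 / M ≤ Gt x) (hGtbd : ‖iteratedFDeriv ℝ 2 Gt x‖ ≤ M)
    (hN0 : |G x - Gt x| ≤ N) (hN2 : ‖iteratedFDeriv ℝ 2 (fun z => G z - Gt z) x‖ ≤ N)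
    (hC : C.PosSemidef) :
    |masterIntegrand d G x C - masterIntegrand d Gt x C|
      ≤ (M * N + M ^ 3 * N) / 2 * (d * ∑ i, C i i) := by
  have hterm : ∀ i j, |D2 d G x i j / G x - D2 d Gt x i j / Gt x| ≤ M * N + M ^ 3 * N := by
    intro i j
    have hD2 : |D2 d G x i j - D2 d Gt x i j| ≤ N := by
      rw [← D2_sub hG hGt]
      exact (abs_D2_le_norm_iteratedFDeriv _ x i j).trans hN2
    refine (abs_div_sub_div_le hM hGlow hGtlow
      ((abs_D2_le_norm_iteratedFDeriv Gt x i j).trans hGtbd) hD2 hN0).trans_eq ?_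
    ring
  calc |masterIntegrand d G x C - masterIntegrand d Gt x C|
      = |∑ i, ∑ j, (D2 d G x i j / G x - D2 d Gt x i j / Gt x) * (C i j / 2)| := by
        simp only [masterIntegrand, ← sum_sub_distrib]
        congr! 3 with i _ j _
        field_simp
    _ ≤ ∑ i, ∑ j, (M * N + M ^ 3 * N) / 2 * |C i j| := by
        refine (abs_sum_le_sum_abs _ _).trans (sum_le_sum fun i _ => ?_)
        refine (abs_sum_le_sum_abs _ _).trans (sum_le_sum fun j _ => ?_)
        calc |(D2 d G x i j / G x - D2 d Gt x i j / Gt x) * (C i j / 2)|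
            = |D2 d G x i j / G x - D2 d Gt x i j / Gt x| / 2 * |C i j| := by
              rw [abs_mul, abs_div, abs_two]
              ring
          _ ≤ (M * N + M ^ 3 * N) / 2 * |C i j| := by
              gcongr
              exact hterm i j
    _ = (M * N + M ^ 3 * N) / 2 * ∑ i, ∑ j, |C i j| := by
        simp only [Finset.mul_sum]
    _ ≤ (M * N + M ^ 3 * N) / 2 * (d * ∑ i, C i i) := by
        have hK : 0 ≤ (M * N + M ^ 3 * N) / 2 := by
          have : 0 ≤ N := (abs_nonneg _).trans hN0
          positivity
        simpa using mul_le_mul_of_nonneg_left hC.sum_sum_abs_apply_le hK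

lemma logWealth_sub_logWealth {d : ℕ} (G Gt : (Fin d → ℝ) → ℝ) (μ : ℝ → Fin d → ℝ)
    (𝔪 : Measure ℝ) (c : ℝ → Matrix (Fin d) (Fin d) ℝ) (T : ℝ) :
    logWealth d G μ 𝔪 c T - logWealth d Gt μ 𝔪 c T
      = (Real.log (G (μ T)) - Real.log (Gt (μ T))) - (Real.log (G (μ 0)) - Real.log (Gt (μ 0)))
        - ((∫ t in Set.Icc 0 T, masterIntegrand d G (μ t) (c t) ∂𝔪)
          - ∫ t in Set.Icc 0 T, masterIntegrand d Gt (μ t) (c t) ∂𝔪) := by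
  simp only [logWealth, masterIntegrand]
  ring

theorem stmt_16_general (d : ℕ) (M : ℝ) (hM : 0 < M)
    (T : ℝ)
    (μ : ℝ → Fin d → ℝ)
    (hμval : ∀ t, (∀ i, 0 < μ t i) ∧ ∑ i, μ t i = 1)
    (𝔪 : Measure ℝ)
    (c : ℝ → Matrix (Fin d) (Fin d) ℝ)
    (hcpsd : ∀ t, (c t).PosSemidef)
    (hcint : ∀ i j, IntegrableOn (fun t => c t i j) (Set.Icc 0 T) 𝔪)
    (G Gt : (Fin d → ℝ) → ℝ) (hG : ContDiff ℝ 2 G) (hGt : ContDiff ℝ 2 Gt)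
    (hGlow : ∀ x : Fin d → ℝ, ((∀ i, 0 ≤ x i) ∧ ∑ i, x i = 1) → 1 / M ≤ G x)
    (hGtlow : ∀ x : Fin d → ℝ, ((∀ i, 0 ≤ x i) ∧ ∑ i, x i = 1) → 1 / M ≤ Gt x)
    (hGtbd : ∀ k : ℕ, k ≤ 2 → ∀ x : Fin d → ℝ, ((∀ i, 0 ≤ x i) ∧ ∑ i, x i = 1) →
      ‖iteratedFDeriv ℝ k Gt x‖ ≤ M)
    (hintG : IntegrableOn
      (fun t => ∑ i, ∑ j, D2 d G (μ t) i j * c t i j / (2 * G (μ t))) (Set.Icc 0 T) 𝔪)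
    (hintGt : IntegrableOn
      (fun t => ∑ i, ∑ j, D2 d Gt (μ t) i j * c t i j / (2 * Gt (μ t))) (Set.Icc 0 T) 𝔪)
    (N : ℝ)
    (hN : ∀ k : ℕ, k ≤ 2 → ∀ x : Fin d → ℝ, ((∀ i, 0 ≤ x i) ∧ ∑ i, x i = 1) →
      ‖iteratedFDeriv ℝ k (fun z => G z - Gt z) x‖ ≤ N) :
    |logWealth d G μ 𝔪 c T - logWealth d Gt μ 𝔪 c T|
      ≤ 2 * M * N + ((M / 2) * d ^ 2 + (M ^ 3 / 2) * d ^ 2) * N *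
          (⨆ i : Fin d, ∫ t in Set.Icc 0 T, c t i i ∂𝔪) := by
  have hsimplex : ∀ t, (∀ i, 0 ≤ μ t i) ∧ ∑ i, μ t i = 1 :=
    fun t => ⟨fun i => ((hμval t).1 i).le, (hμval t).2⟩
  have hGdiff : ∀ t, |G (μ t) - Gt (μ t)| ≤ N := fun t => by
    simpa using hN 0 (by norm_num) _ (hsimplex t)
  have hlog : ∀ t, |Real.log (G (μ t)) - Real.log (Gt (μ t))| ≤ M * N := fun t =>
    (abs_log_sub_log_le_mul hM (hGlow _ (hsimplex t)) (hGtlow _ (hsimplex t))).trans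
      (mul_le_mul_of_nonneg_left (hGdiff t) hM.le)
  set K := (M * N + M ^ 3 * N) / 2 with hK_def
  have hK : 0 ≤ K := by
    have : 0 ≤ N := (abs_nonneg _).trans (hGdiff 0)
    positivity
  have hintegral : |(∫ t in Set.Icc 0 T, masterIntegrand d G (μ t) (c t) ∂𝔪)
      - ∫ t in Set.Icc 0 T, masterIntegrand d Gt (μ t) (c t) ∂𝔪|
      ≤ K * (d * ∑ i, ∫ t in Set.Icc 0 T, c t i i ∂𝔪) := by
    rw [← integral_finsetSum univ fun i _ => hcint i i, ← integral_const_mul,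
      ← integral_const_mul]
    refine abs_integral_sub_le_of_abs_sub_le hintG hintGt
      (((integrable_finsetSum univ fun i _ => hcint i i).const_mul _).const_mul _) fun t => ?_
    exact abs_masterIntegrand_sub_le hM hG.contDiffAt hGt.contDiffAt (hGlow _ (hsimplex t))
      (hGtlow _ (hsimplex t)) (hGtbd 2 le_rfl _ (hsimplex t)) (hGdiff t)
      (hN 2 le_rfl _ (hsimplex t)) (hcpsd t)
  have hdiag : ∑ i, ∫ t in Set.Icc 0 T, c t i i ∂𝔪
      ≤ d * ⨆ i : Fin d, ∫ t in Set.Icc 0 T, c t i i ∂𝔪 := by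
    simpa using sum_le_card_mul_ciSup fun i => ∫ t in Set.Icc 0 T, c t i i ∂𝔪
  rw [logWealth_sub_logWealth]
  calc _ ≤ M * N + M * N + K * (d * ∑ i, ∫ t in Set.Icc 0 T, c t i i ∂𝔪) :=
        (abs_sub _ _).trans (add_le_add ((abs_sub _ _).trans (add_le_add (hlog T) (hlog 0)))
          hintegral)
    _ ≤ M * N + M * N + K * (d * (d * ⨆ i : Fin d, ∫ t in Set.Icc 0 T, c t i i ∂𝔪)) := by
        gcongr
    _ = _ := by
        rw [hK_def]
        ring

/-- Continuity (with an explicit modulus) of `G ↦ log V^G_T` on `𝓖^{M,α}` with respect to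
the `C^{2,0}`-norm: if `N` bounds `‖G - G̃‖_{C^{2,0}}` then
`|log V^G_T - log V^{G̃}_T| ≤ 2 M N + ((M/2) d² + (M³/2) d²) N · max_i [μ^i,μ^i]_T`. -/
theorem stmt_16 (d : ℕ) (hd : 0 < d) (M α : ℝ) (hM : 0 < M) (hα : 0 < α) (hα1 : α ≤ 1)
    (T : ℝ) (hT : 0 < T)
    (μ : ℝ → Fin d → ℝ) (hμcont : Continuous μ)
    (hμval : ∀ t, (∀ i, 0 < μ t i) ∧ ∑ i, μ t i = 1)
    (𝔪 : Measure ℝ) [IsLocallyFiniteMeasure 𝔪]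
    (c : ℝ → Matrix (Fin d) (Fin d) ℝ) (hcmeas : ∀ i j, Measurable fun t => c t i j)
    (hcpsd : ∀ t, (c t).PosSemidef)
    (hcint : ∀ i j, IntegrableOn (fun t => c t i j) (Set.Icc 0 T) 𝔪)
    (G Gt : (Fin d → ℝ) → ℝ) (hG : ContDiff ℝ 2 G) (hGt : ContDiff ℝ 2 Gt)
    (hGconc : ConcaveOn ℝ {x : Fin d → ℝ | (∀ i, 0 ≤ x i) ∧ ∑ i, x i = 1} G)
    (hGtconc : ConcaveOn ℝ {x : Fin d → ℝ | (∀ i, 0 ≤ x i) ∧ ∑ i, x i = 1} Gt)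
    (hGlow : ∀ x : Fin d → ℝ, ((∀ i, 0 ≤ x i) ∧ ∑ i, x i = 1) → 1 / M ≤ G x)
    (hGtlow : ∀ x : Fin d → ℝ, ((∀ i, 0 ≤ x i) ∧ ∑ i, x i = 1) → 1 / M ≤ Gt x)
    (hGbd : ∀ k : ℕ, k ≤ 2 → ∀ x : Fin d → ℝ, ((∀ i, 0 ≤ x i) ∧ ∑ i, x i = 1) →
      ‖iteratedFDeriv ℝ k G x‖ ≤ M)
    (hGtbd : ∀ k : ℕ, k ≤ 2 → ∀ x : Fin d → ℝ, ((∀ i, 0 ≤ x i) ∧ ∑ i, x i = 1) →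
      ‖iteratedFDeriv ℝ k Gt x‖ ≤ M)
    (hGhold : ∀ x y : Fin d → ℝ, ((∀ i, 0 ≤ x i) ∧ ∑ i, x i = 1) →
      ((∀ i, 0 ≤ y i) ∧ ∑ i, y i = 1) →
      ‖iteratedFDeriv ℝ 2 G x - iteratedFDeriv ℝ 2 G y‖ ≤ M * ‖x - y‖ ^ α)
    (hGthold : ∀ x y : Fin d → ℝ, ((∀ i, 0 ≤ x i) ∧ ∑ i, x i = 1) →
      ((∀ i, 0 ≤ y i) ∧ ∑ i, y i = 1) →
      ‖iteratedFDeriv ℝ 2 Gt x - iteratedFDeriv ℝ 2 Gt y‖ ≤ M * ‖x - y‖ ^ α)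
    (hintG : IntegrableOn
      (fun t => ∑ i, ∑ j, D2 d G (μ t) i j * c t i j / (2 * G (μ t))) (Set.Icc 0 T) 𝔪)
    (hintGt : IntegrableOn
      (fun t => ∑ i, ∑ j, D2 d Gt (μ t) i j * c t i j / (2 * Gt (μ t))) (Set.Icc 0 T) 𝔪)
    (N : ℝ)
    (hN : ∀ k : ℕ, k ≤ 2 → ∀ x : Fin d → ℝ, ((∀ i, 0 ≤ x i) ∧ ∑ i, x i = 1) →
      ‖iteratedFDeriv ℝ k (fun z => G z - Gt z) x‖ ≤ N) :
    |logWealth d G μ 𝔪 c T - logWealth d Gt μ 𝔪 c T|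
      ≤ 2 * M * N + ((M / 2) * d ^ 2 + (M ^ 3 / 2) * d ^ 2) * N *
          (⨆ i : Fin d, ∫ t in Set.Icc 0 T, c t i i ∂𝔪) :=
  stmt_16_general d M hM T μ hμval 𝔪 c hcpsd hcint G Gt hG hGt hGlow hGtlow hGtbd hintG hintGt N hN
end
end
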